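/- Let α : ℝ → [a,b] ⊂ (0,1) be continuously differentiable with bounded derivative, a₀ ∈ ℝ, and Π ⊂ (t₀,t₁) × ℝ countable with Σ_{(x,y)∈Π} |y|^{-1/b'} < ∞ for some b < b' < 1. Then there exists a unique càdlàg function f ∈ D[t₀,t₁) satisfying f(t) = a₀ + Σ_{(x,y)∈Π} 1_{(t₀,t]}(x) y^⟨−1/α(f(x₋))⟩ for all t ∈ [t₀,t₁). In particular f(t₀) = a₀. -/

import Mathlib

open MeasureTheory Filter Set

noncomputable def spow (r s : ℝ) : ℝ := Real.sign r * |r| ^ s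

noncomputable def wab (a b y : ℝ) : ℝ :=
  max (|y| ^ (-1 / a) * (1 + abs (Real.log (abs y)))) (|y| ^ (-1 / b) * (1 + abs (Real.log (abs y))))

noncomputable def Mconst (α : ℝ → ℝ) : ℝ := ⨆ ξ : ℝ, |deriv α ξ| / (α ξ) ^ 2

/-- Càdlàg on `[t₀,t₁)`: right-continuous on `[t₀,t₁)` and left limits exist on `(t₀,t₁]`. -/
def CadlagOn (f : ℝ → ℝ) (t₀ t₁ : ℝ) : Prop :=
  (∀ u ∈ Set.Ico t₀ t₁, Filter.Tendsto f (nhdsWithin u (Set.Ioi u)) (nhds (f u))) ∧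
  (∀ u ∈ Set.Ioc t₀ t₁, ∃ L, Filter.Tendsto f (nhdsWithin u (Set.Iio u)) (nhds L))

/-- The sum `∑_{(x,y)∈Λ} 1_{(t₀,t]}(x) y^⟨-1/α(f(x₋))⟩`. -/
noncomputable def jumpSum (α : ℝ → ℝ) (Λ : Set (ℝ × ℝ)) (t₀ t : ℝ) (f : ℝ → ℝ) : ℝ :=
  ∑' p : Λ, if (p : ℝ × ℝ).1 ∈ Set.Ioc t₀ t
    then spow (p : ℝ × ℝ).2 (-1 / α (Function.leftLim f (p : ℝ × ℝ).1)) else 0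

/-- The truncated sum over points with `|y| ≤ n`. -/
noncomputable def jumpSumTrunc (α : ℝ → ℝ) (Λ : Set (ℝ × ℝ)) (n : ℝ) (t₀ t : ℝ) (f : ℝ → ℝ) : ℝ :=
  ∑' p : Λ, if |(p : ℝ × ℝ).2| ≤ n ∧ (p : ℝ × ℝ).1 ∈ Set.Ioc t₀ t
    then spow (p : ℝ × ℝ).2 (-1 / α (Function.leftLim f (p : ℝ × ℝ).1)) else 0

/-!
Write `x`, `y` for the coordinates of the points of `Λ`. The left limits `u = f(·₋)` of a solution
solve the fixed-point equation `u t = a₀ + ∑_{x < t} y^⟨-1/α(u x)⟩`, and conversely a solution `u`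
of it yields the solution `f t = a₀ + ∑_{x ≤ t} y^⟨-1/α(u x)⟩`, whose left limits are `u`.

The jump `y^⟨-1/α(v)⟩` is bounded by `w(y) = wab a b y` and Lipschitz in `v` with constant
`L(y) = C w(y) / a²` (`|α'| ≤ C`), and `∑ w(y) < ∞` since `w(y) ≤ |y|^(-1/b')` for large `|y|`.
With `S t = ∑_{x < t} L(y)`, the discrete integral `∑_{x < t} L(y) e^{2 S x} ≤ (e^{2 S t} - 1)/2`
makes the fixed-point map a `1/2`-contraction for the weighted norm `sup_t |u t| e^{-2 S t}`,
and Banach's fixed-point theorem gives existence and uniqueness.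
-/

open Topology Real
open scoped NNReal ENNReal UniformConvergence

section WeightedContraction

variable {X : Type*}

lemma UniformFun.edist_ofFun_le_ofReal {u v : X → ℝ} {c : ℝ} (h : ∀ t, |u t - v t| ≤ c) :
    edist (UniformFun.ofFun u) (UniformFun.ofFun v) ≤ ENNReal.ofReal c :=
  UniformFun.edist_le.2 fun t => by
    rw [edist_dist, Real.dist_eq]
    exact ENNReal.ofReal_le_ofReal (h t)

lemma UniformFun.abs_sub_le_toReal_edist {w w' : X →ᵤ ℝ} (h : edist w w' ≠ ⊤) (t : X) :
    |toFun w t - toFun w' t| ≤ (edist w w').toReal := by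
  rw [← Real.dist_eq, dist_edist]
  exact ENNReal.toReal_mono h UniformFun.edist_eval_le

theorem exists_fixedPoint_of_sup_contraction {Ψ : (X → ℝ) → X → ℝ} {q : ℝ≥0} (hq : q < 1)
    (hΨ : ∀ u v (c : ℝ), (∀ s, |u s - v s| ≤ c) → ∀ t, |Ψ u t - Ψ v t| ≤ q * c)
    {u₀ : X → ℝ} {D : ℝ} (hu₀ : ∀ t, |Ψ u₀ t - u₀ t| ≤ D) :
    ∃ u, Ψ u = u ∧ ∀ v, Ψ v = v → (∃ D', ∀ t, |v t - u₀ t| ≤ D') → v = u := by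
  -- `K > 0`, so that `K * ⊤ = ⊤` and points at infinite distance are no obstacle to contracting.
  set K : ℝ≥0 := max q 2⁻¹
  let T : (X →ᵤ ℝ) → (X →ᵤ ℝ) := fun w => UniformFun.ofFun (Ψ (UniformFun.toFun w))
  have hT : ContractingWith K T := by
    refine ⟨max_lt hq (by norm_num), fun w w' => ?_⟩
    rcases eq_or_ne (edist w w') ⊤ with h | h
    · simp [h, ENNReal.mul_top, K]
    have hc := UniformFun.abs_sub_le_toReal_edist h
    calc edist (T w) (T w') ≤ ENNReal.ofReal (K * (edist w w').toReal) :=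
          UniformFun.edist_ofFun_le_ofReal fun t => (hΨ _ _ _ hc t).trans
            (mul_le_mul_of_nonneg_right (mod_cast le_max_left _ _) ENNReal.toReal_nonneg)
      _ = K * edist w w' := by
          rw [ENNReal.ofReal_mul K.coe_nonneg, ENNReal.ofReal_coe_nnreal,
            ENNReal.ofReal_toReal h]
  have h₀ : edist (UniformFun.ofFun u₀) (T (UniformFun.ofFun u₀)) ≠ ⊤ :=
    ne_top_of_le_ne_top ENNReal.ofReal_ne_top
      (UniformFun.edist_ofFun_le_ofReal fun t => (abs_sub_comm _ _).trans_le (hu₀ t))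
  set w := hT.efixedPoint T (UniformFun.ofFun u₀) h₀
  have hw : T w = w := hT.efixedPoint_isFixedPt h₀
  refine ⟨UniformFun.toFun w, congrArg UniformFun.toFun hw, fun v hv ⟨D', hD'⟩ => ?_⟩
  have hvT : Function.IsFixedPt T (UniformFun.ofFun v) := congrArg UniformFun.ofFun hv
  have hvw : edist (UniformFun.ofFun v) w ≠ ⊤ := by
    refine ne_top_of_le_ne_top ?_ (edist_triangle _ (UniformFun.ofFun u₀) _)
    exact ENNReal.add_ne_top.2 ⟨ne_top_of_le_ne_top ENNReal.ofReal_ne_top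
      (UniformFun.edist_ofFun_le_ofReal hD'), (hT.edist_efixedPoint_lt_top h₀).ne⟩
  exact congrArg UniformFun.toFun
    ((hT.eq_or_edist_eq_top_of_fixedPoints hvT hw).resolve_right hvw)

theorem exists_fixedPoint_of_weighted_contraction {Φ : (X → ℝ) → X → ℝ} {ρ : X → ℝ}
    (hρ : ∀ t, 0 < ρ t) {q : ℝ≥0} (hq : q < 1)
    (hΦ : ∀ u v (c : ℝ), (∀ s, |u s - v s| ≤ c * ρ s) → ∀ t, |Φ u t - Φ v t| ≤ q * c * ρ t)
    {u₀ : X → ℝ} {D : ℝ} (hu₀ : ∀ t, |Φ u₀ t - u₀ t| ≤ D * ρ t) :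
    ∃ u, Φ u = u ∧ ∀ v, Φ v = v → (∃ D', ∀ t, |v t - u₀ t| ≤ D' * ρ t) → v = u := by
  have weighted {f g : X → ℝ} {c : ℝ} (t : X) :
      |f t / ρ t - g t / ρ t| ≤ c ↔ |f t - g t| ≤ c * ρ t := by
    rw [← sub_div, abs_div, abs_of_pos (hρ t), div_le_iff₀ (hρ t)]
  have unweight (f : X → ℝ) : (fun t => ρ t * (f t / ρ t)) = f :=
    funext fun t => mul_div_cancel₀ _ (hρ t).ne'
  obtain ⟨w, hw, hw_unique⟩ := exists_fixedPoint_of_sup_contraction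
    (Ψ := fun w t => Φ (fun s => ρ s * w s) t / ρ t) (u₀ := fun t => u₀ t / ρ t) hq
    (fun u v c huv t => (weighted t).2 (hΦ _ _ c (fun s => by
      rw [← mul_sub, abs_mul, abs_of_pos (hρ s), mul_comm]
      exact mul_le_mul_of_nonneg_right (huv s) (hρ s).le) t))
    (fun t => (weighted t).2 (by simpa only [unweight] using hu₀ t))
  refine ⟨fun t => ρ t * w t, ?_, fun v hv ⟨D', hD'⟩ => ?_⟩
  · conv_rhs => rw [← hw]
    exact funext fun t => (mul_div_cancel₀ _ (hρ t).ne').symm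
  · have hvw : (fun t => v t / ρ t) = w :=
      hw_unique _ (by simp only [unweight, hv]) ⟨D', fun t => (weighted t).2 (hD' t)⟩
    subst hvw
    exact (unweight v).symm

end WeightedContraction


section JumpSums

variable {ι : Type*}

noncomputable def tsumIio (x c : ι → ℝ) (t : ℝ) : ℝ := ∑' i, {i | x i < t}.indicator c i

noncomputable def tsumIic (x c : ι → ℝ) (t : ℝ) : ℝ := ∑' i, {i | x i ≤ t}.indicator c i

variable {x c c' d w : ι → ℝ}

lemma abs_tsumIio_le_tsum (hw : Summable w) (hc : ∀ i, |c i| ≤ w i) (t : ℝ) :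
    |tsumIio x c t| ≤ ∑' i, w i := by
  rw [tsumIio, ← Real.norm_eq_abs]
  exact tsum_of_norm_bounded hw.hasSum fun i => (norm_indicator_le_norm_self c i).trans (hc i)

lemma abs_tsumIio_sub_le (hc : Summable c) (hc' : Summable c') (hd : Summable d)
    (h : ∀ i, |c i - c' i| ≤ d i) (t : ℝ) :
    |tsumIio x c t - tsumIio x c' t| ≤ tsumIio x d t := by
  unfold tsumIio
  rw [← (hc.indicator _).tsum_sub (hc'.indicator _), ← Set.indicator_sub, ← Real.norm_eq_abs]
  refine tsum_of_norm_bounded (hd.indicator _).hasSum fun i => ?_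
  by_cases hi : x i < t <;> simp [Set.indicator, hi, h i]

lemma tsumIio_nonneg (hw0 : ∀ i, 0 ≤ w i) (t : ℝ) : 0 ≤ tsumIio x w t :=
  tsum_nonneg fun i => Set.indicator_nonneg (fun i _ => hw0 i) i

lemma tsumIio_le_tsum (hw : Summable w) (hw0 : ∀ i, 0 ≤ w i) (t : ℝ) :
    tsumIio x w t ≤ ∑' i, w i :=
  (hw.indicator _).tsum_le_tsum (Set.indicator_le_self' fun i _ => hw0 i) hw

lemma tsumIic_le_tsumIio (hw : Summable w) (hw0 : ∀ i, 0 ≤ w i) {v t : ℝ} (hvt : v < t) :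
    tsumIic x w v ≤ tsumIio x w t :=
  (hw.indicator _).tsum_le_tsum
    (Set.indicator_le_indicator_of_subset (fun _ hi => lt_of_le_of_lt hi hvt) hw0)
    (hw.indicator _)

lemma tsumIic_sub_tsumIio (hc : Summable c) (v : ℝ) :
    tsumIic x c v - tsumIio x c v = ∑' i, {i | x i = v}.indicator c i := by
  rw [tsumIic, tsumIio, ← (hc.indicator _).tsum_sub (hc.indicator _)]
  refine tsum_congr fun i => ?_
  rcases lt_trichotomy (x i) v with h | h | h
  · simp [h, h.le, h.ne]
  · simp [h]
  · simp [not_le.2 h, not_lt.2 h.le, h.ne']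

lemma tendsto_tsumIic_nhdsGT (hw : Summable w) (hc : ∀ i, |c i| ≤ w i) (t : ℝ) :
    Tendsto (tsumIic x c) (𝓝[>] t) (𝓝 (tsumIic x c t)) := by
  refine tendsto_tsum_of_dominated_convergence hw (fun i => tendsto_const_nhds.congr' ?_)
    (.of_forall fun s i => (norm_indicator_le_norm_self c i).trans (hc i))
  by_cases h : x i ≤ t
  · filter_upwards [self_mem_nhdsWithin] with s hs
    simp [h, h.trans (le_of_lt hs)]
  · filter_upwards [Ioo_mem_nhdsGT (not_le.1 h)] with s hs
    simp [h, not_le.2 hs.2]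

lemma tendsto_tsumIic_nhdsLT (hw : Summable w) (hc : ∀ i, |c i| ≤ w i) (t : ℝ) :
    Tendsto (tsumIic x c) (𝓝[<] t) (𝓝 (tsumIio x c t)) := by
  refine tendsto_tsum_of_dominated_convergence hw (fun i => tendsto_const_nhds.congr' ?_)
    (.of_forall fun s i => (norm_indicator_le_norm_self c i).trans (hc i))
  by_cases h : x i < t
  · filter_upwards [Ioo_mem_nhdsLT h] with s hs
    simp [h, hs.1.le]
  · filter_upwards [self_mem_nhdsWithin] with s hs
    simp [h, not_le.2 ((lt_of_lt_of_le hs (not_lt.1 h)))]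

/-- A discrete form of `∫ e^{2S} dS = (e^{2S(t)} - 1) / 2`: `S' v - S v` is the mass sitting at
`v`, and the monotonicity hypothesis makes the masses of different points not overlap. -/
lemma Finset.sum_sub_mul_exp_le {β : Type*} [LinearOrder β] {S S' : β → ℝ}
    (hS0 : ∀ v, 0 ≤ S v) (hSS' : ∀ v w, v < w → S' v ≤ S w) (V : Finset β) {t : β}
    (hV : ∀ v ∈ V, v < t) :
    ∑ v ∈ V, (S' v - S v) * exp (2 * S v) ≤ (exp (2 * S t) - 1) / 2 := by
  induction V using Finset.induction_on_max generalizing t with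
  | empty =>
    simp only [Finset.sum_empty]
    linarith [one_le_exp (mul_nonneg zero_le_two (hS0 t))]
  | insert a V hlt ih =>
    rw [Finset.sum_insert fun ha => lt_irrefl a (hlt a ha)]
    have hexp : exp (2 * S' a) = exp (2 * (S' a - S a)) * exp (2 * S a) := by
      rw [← exp_add]; ring_nf
    calc (S' a - S a) * exp (2 * S a) + ∑ v ∈ V, (S' v - S v) * exp (2 * S v)
        ≤ (S' a - S a) * exp (2 * S a) + (exp (2 * S a) - 1) / 2 := by gcongr; exact ih hlt
      _ ≤ (exp (2 * S' a) - 1) / 2 := by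
        nlinarith [add_one_le_exp (2 * (S' a - S a)), exp_pos (2 * S a)]
      _ ≤ (exp (2 * S t) - 1) / 2 := by
        gcongr; exact hSS' a t (hV a (Finset.mem_insert_self a V))

lemma tsumIio_mul_exp_le {L : ι → ℝ} (hL0 : ∀ i, 0 ≤ L i) (hL : Summable L) (t : ℝ) :
    tsumIio x (fun i => L i * exp (2 * tsumIio x L (x i))) t ≤
      (exp (2 * tsumIio x L t) - 1) / 2 := by
  set S := tsumIio x L
  have hS0 : ∀ v, 0 ≤ S v := tsumIio_nonneg hL0
  have hS1 : 0 ≤ (exp (2 * S t) - 1) / 2 := by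
    linarith [one_le_exp (mul_nonneg zero_le_two (hS0 t))]
  refine tsum_le_of_sum_le' hS1 fun F => ?_
  simp only [Set.indicator_apply, Set.mem_ofPred_eq, ← Finset.sum_filter]
  set F' := F.filter (x · < t)
  have hfiber (v : ℝ) : ∑ i ∈ F' with x i = v, L i ≤ tsumIic x L v - S v := by
    rw [tsumIic_sub_tsumIio hL, Finset.sum_filter]
    simpa only [Set.indicator_apply, Set.mem_ofPred_eq] using
      (hL.indicator {i | x i = v}).sum_le_tsum F' fun i _ =>
        Set.indicator_nonneg (fun i _ => hL0 i) i
  calc ∑ i ∈ F', L i * exp (2 * S (x i))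
      = ∑ v ∈ F'.image x, (∑ i ∈ F' with x i = v, L i) * exp (2 * S v) := by
        rw [← Finset.sum_fiberwise_of_maps_to fun i hi => Finset.mem_image_of_mem x hi]
        refine Finset.sum_congr rfl fun v _ => ?_
        rw [Finset.sum_mul]
        exact Finset.sum_congr rfl fun i hi => by rw [(Finset.mem_filter.1 hi).2]
    _ ≤ ∑ v ∈ F'.image x, (tsumIic x L v - S v) * exp (2 * S v) := by
        gcongr with v; exact hfiber v
    _ ≤ (exp (2 * S t) - 1) / 2 := by
        refine Finset.sum_sub_mul_exp_le hS0 (fun _ _ => tsumIic_le_tsumIio hL hL0) _ ?_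
        simp only [Finset.mem_image, Finset.mem_filter, F']
        rintro _ ⟨i, ⟨-, hi⟩, rfl⟩
        exact hi

/-- By `tsumIio_mul_exp_le`, the equation is a `1/2`-contraction for the weight
`exp (2 * tsumIio x L t)`. -/
theorem existsUnique_eq_add_tsumIio {L : ι → ℝ} {J : ι → ℝ → ℝ} (hw : Summable w)
    (hL : Summable L) (hJ : ∀ i u, |J i u| ≤ w i)
    (hJL : ∀ i u v, |J i u - J i v| ≤ L i * |u - v|) (a₀ : ℝ) :
    ∃! u : ℝ → ℝ, ∀ t, u t = a₀ + tsumIio x (fun i => J i (u (x i))) t := by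
  have hL0 (i : ι) : 0 ≤ L i := by simpa using (abs_nonneg _).trans (hJL i 1 0)
  have hJs (u : ℝ → ℝ) : Summable fun i => J i (u (x i)) := hw.of_norm_bounded fun i => hJ i _
  set S := tsumIio x L
  set ρ : ℝ → ℝ := fun t => exp (2 * S t)
  have hρ1 (t : ℝ) : 1 ≤ ρ t := one_le_exp (mul_nonneg zero_le_two (tsumIio_nonneg hL0 t))
  have hρE (t : ℝ) : ρ t ≤ exp (2 * ∑' i, L i) :=
    exp_le_exp.2 (by linarith [tsumIio_le_tsum (x := x) hL hL0 t])
  set Φ : (ℝ → ℝ) → ℝ → ℝ := fun u t => a₀ + tsumIio x (fun i => J i (u (x i))) t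
  have hΦ₀ (u : ℝ → ℝ) (t : ℝ) : |Φ u t - a₀| ≤ (∑' i, w i) * ρ t := by
    simp only [Φ, add_sub_cancel_left]
    exact (abs_tsumIio_le_tsum hw (fun i => hJ i _) t).trans
      (le_mul_of_one_le_right (tsum_nonneg fun i => (abs_nonneg _).trans (hJ i 0)) (hρ1 t))
  have hΦ (u v : ℝ → ℝ) (c : ℝ) (huv : ∀ s, |u s - v s| ≤ c * ρ s) (t : ℝ) :
      |Φ u t - Φ v t| ≤ (2⁻¹ : ℝ≥0) * c * ρ t := by
    have hc : 0 ≤ c := nonneg_of_mul_nonneg_left ((abs_nonneg _).trans (huv 0)) (exp_pos _)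
    have hLρ : Summable fun i => L i * ρ (x i) :=
      (hL.mul_right (exp (2 * ∑' i, L i))).of_nonneg_of_le
        (fun i => mul_nonneg (hL0 i) (exp_pos _).le) fun i => by gcongr; exacts [hL0 i, hρE _]
    calc |Φ u t - Φ v t| ≤ tsumIio x (fun i => c * (L i * ρ (x i))) t := by
          simp only [Φ, add_sub_add_left_eq_sub]
          refine abs_tsumIio_sub_le (hJs u) (hJs v) (hLρ.mul_left c) (fun i => ?_) t
          calc |J i (u (x i)) - J i (v (x i))| ≤ L i * (c * ρ (x i)) :=
                (hJL i _ _).trans (by gcongr; exacts [hL0 i, huv _])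
            _ = c * (L i * ρ (x i)) := by ring
      _ = c * tsumIio x (fun i => L i * ρ (x i)) t := by
          simp only [tsumIio, Set.indicator_apply, mul_ite, mul_zero, ← tsum_mul_left]
      _ ≤ c * ((ρ t - 1) / 2) := by gcongr; exact tsumIio_mul_exp_le hL0 hL t
      _ ≤ (2⁻¹ : ℝ≥0) * c * ρ t := by push_cast; nlinarith
  obtain ⟨u, hu, hu_unique⟩ := exists_fixedPoint_of_weighted_contraction (fun t => exp_pos _)
    (by norm_num) hΦ (u₀ := fun _ => a₀) (hΦ₀ fun _ => a₀)
  refine ⟨u, fun t => (congrFun hu t).symm, fun v hv => ?_⟩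
  exact hu_unique v (funext fun t => (hv t).symm) ⟨_, fun t => by rw [hv t]; exact hΦ₀ v t⟩

end JumpSums

section JumpEquation

variable {ι : Type*} {x c w : ι → ℝ} {J : ι → ℝ → ℝ} {a₀ t₀ t₁ : ℝ}

lemma tsumIic_eq_zero_of_lt {t : ℝ} (h : ∀ i, t < x i) : tsumIic x c t = 0 := by
  simp [tsumIic, Set.indicator, not_le.2 (h _)]

lemma cadlagOn_add_tsumIic (hw : Summable w) (hc : ∀ i, |c i| ≤ w i) (a₀ t₀ t₁ : ℝ) :
    CadlagOn (fun t => a₀ + tsumIic x c t) t₀ t₁ :=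
  ⟨fun s _ => (tendsto_tsumIic_nhdsGT hw hc s).const_add a₀,
    fun s _ => ⟨_, (tendsto_tsumIic_nhdsLT hw hc s).const_add a₀⟩⟩

lemma leftLim_eq_add_tsumIio (hw : Summable w) (hc : ∀ i, |c i| ≤ w i) {f : ℝ → ℝ} {s : ℝ}
    (hs : t₀ < s) (hf : EqOn f (fun t => a₀ + tsumIic x c t) (Ioo t₀ s)) :
    Function.leftLim f s = a₀ + tsumIio x c s :=
  leftLim_eq_of_tendsto <| ((tendsto_tsumIic_nhdsLT hw hc s).const_add a₀).congr' <| by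
    filter_upwards [Ioo_mem_nhdsLT hs] with t ht using (hf ht).symm

lemma leftLim_add_tsumIic_of_fixed (hw : Summable w) (hJ : ∀ i v, |J i v| ≤ w i) {u : ℝ → ℝ}
    (hu : ∀ t, u t = a₀ + tsumIio x (fun i => J i (u (x i))) t) (s : ℝ) :
    Function.leftLim (fun t => a₀ + tsumIic x (fun i => J i (u (x i))) t) s = u s :=
  (leftLim_eq_add_tsumIio hw (fun i => hJ i _) (sub_one_lt s) fun _ _ => rfl).trans (hu s).symm

/-- The left limits of a solution on `[t₀, t₁)` solve the fixed-point equation of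
`existsUnique_eq_add_tsumIio`, which pins them down, and with them the solution. -/
lemma eqOn_of_eq_add_tsumIic_leftLim (hw : Summable w) (hJ : ∀ i v, |J i v| ≤ w i)
    (hx : ∀ i, x i ∈ Ioo t₀ t₁) {u : ℝ → ℝ}
    (hu : ∀ v, (∀ t, v t = a₀ + tsumIio x (fun i => J i (v (x i))) t) → v = u) {g : ℝ → ℝ}
    (hg : ∀ t ∈ Ico t₀ t₁, g t = a₀ + tsumIic x (fun i => J i (Function.leftLim g (x i))) t) :
    EqOn g (fun t => a₀ + tsumIic x (fun i => J i (u (x i))) t) (Ico t₀ t₁) := by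
  set c := fun i => J i (Function.leftLim g (x i))
  have hleft (i : ι) : Function.leftLim g (x i) = a₀ + tsumIio x c (x i) :=
    leftLim_eq_add_tsumIio hw (fun i => hJ i _) (hx i).1
      fun t ht => hg t ⟨ht.1.le, ht.2.trans (hx i).2⟩
  have hv : (fun s => a₀ + tsumIio x c s) = u := hu _ fun t => by simp only [← hleft, c]
  have hc : c = fun i => J i (u (x i)) := funext fun i => by simp only [← hv, ← hleft, c]
  intro t ht
  rw [hg t ht, hc]

end JumpEquation

section Coefficients

variable {a b : ℝ}

lemma abs_sign_le_one (r : ℝ) : |Real.sign r| ≤ 1 := by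
  rcases Real.sign_apply_eq r with h | h | h <;> simp [h]

lemma abs_spow_le (y s : ℝ) : |spow y s| ≤ |y| ^ s := by
  rw [spow, abs_mul, abs_of_nonneg (rpow_nonneg (abs_nonneg y) s)]
  exact mul_le_of_le_one_left (rpow_nonneg (abs_nonneg y) s) (abs_sign_le_one y)

lemma abs_spow_sub_spow_le (y s s' : ℝ) : |spow y s - spow y s'| ≤ |(|y| ^ s - |y| ^ s')| := by
  rw [spow, spow, ← mul_sub, abs_mul]
  exact mul_le_of_le_one_left (abs_nonneg _) (abs_sign_le_one y)

lemma zero_rpow_neg_one_div {c : ℝ} (hc : c ≠ 0) : (0 : ℝ) ^ (-1 / c) = 0 :=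
  zero_rpow (div_ne_zero (by norm_num) hc)

lemma neg_one_div_le_neg_one_div {c d : ℝ} (hc : 0 < c) (hcd : c ≤ d) : -1 / c ≤ -1 / d := by
  rw [neg_div, neg_div, neg_le_neg_iff]; exact one_div_le_one_div_of_le hc hcd

lemma wab_eq_max_mul (a b y : ℝ) :
    wab a b y = max (|y| ^ (-1 / a)) (|y| ^ (-1 / b)) * (1 + |(log |y|)|) :=
  (max_mul_of_nonneg _ _ (by positivity)).symm

lemma wab_nonneg (a b y : ℝ) : 0 ≤ wab a b y := by
  rw [wab_eq_max_mul]
  exact mul_nonneg (le_max_of_le_left (by positivity)) (by positivity)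

lemma rpow_neg_inv_le_max (ha : 0 < a) {c : ℝ} (hc : c ∈ Icc a b) (y : ℝ) :
    |y| ^ (-1 / c) ≤ max (|y| ^ (-1 / a)) (|y| ^ (-1 / b)) := by
  rcases eq_or_ne y 0 with rfl | hy
  · rw [abs_zero, zero_rpow_neg_one_div (ha.trans_le hc.1).ne']
    exact le_max_of_le_left (rpow_nonneg le_rfl _)
  rcases le_or_gt 1 |y| with h1 | h1
  · exact le_max_of_le_right (rpow_le_rpow_of_exponent_le h1
      (neg_one_div_le_neg_one_div (ha.trans_le hc.1) hc.2))
  · exact le_max_of_le_left (rpow_le_rpow_of_exponent_ge (abs_pos.2 hy) h1.le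
      (neg_one_div_le_neg_one_div ha hc.1))

lemma abs_spow_neg_inv_le_wab (ha : 0 < a) {c : ℝ} (hc : c ∈ Icc a b) (y : ℝ) :
    |spow y (-1 / c)| ≤ wab a b y := by
  rw [wab_eq_max_mul]
  refine (abs_spow_le y _).trans ((rpow_neg_inv_le_max ha hc y).trans ?_)
  exact le_mul_of_one_le_right (le_max_of_le_left (by positivity))
    (by linarith [abs_nonneg (log |y|)])

lemma abs_spow_neg_inv_sub_le (ha : 0 < a) {c d : ℝ} (hc : c ∈ Icc a b) (hd : d ∈ Icc a b)
    (y : ℝ) : |spow y (-1 / c) - spow y (-1 / d)| ≤ wab a b y / a ^ 2 * |c - d| := by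
  refine (abs_spow_sub_spow_le y _ _).trans ?_
  rcases eq_or_ne y 0 with rfl | hy
  · rw [abs_zero, zero_rpow_neg_one_div (ha.trans_le hc.1).ne',
      zero_rpow_neg_one_div (ha.trans_le hd.1).ne', sub_zero, abs_zero]
    exact mul_nonneg (div_nonneg (wab_nonneg a b 0) (sq_nonneg a)) (abs_nonneg _)
  have hy0 : 0 < |y| := abs_pos.2 hy
  have hderiv (e : ℝ) (he : e ∈ Icc a b) : HasDerivWithinAt (fun e => |y| ^ (-1 / e))
      (log |y| * (e ^ 2)⁻¹ * |y| ^ (-1 / e)) (Icc a b) e := by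
    have hinv : HasDerivAt (fun e : ℝ => -1 / e) (e ^ 2)⁻¹ e := by
      have := (hasDerivAt_inv (ha.trans_le he.1).ne').const_mul (-1)
      simp only [neg_mul, one_mul, neg_neg] at this
      simpa only [neg_div, one_div] using this
    exact (hinv.const_rpow hy0).hasDerivWithinAt
  have hbound (e : ℝ) (he : e ∈ Icc a b) :
      ‖log |y| * (e ^ 2)⁻¹ * |y| ^ (-1 / e)‖ ≤ wab a b y / a ^ 2 := by
    rw [Real.norm_eq_abs, abs_mul, abs_mul, abs_of_pos (rpow_pos_of_pos hy0 _),
      abs_of_pos (inv_pos.2 (pow_pos (ha.trans_le he.1) 2)), wab_eq_max_mul]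
    calc |(log |y|)| * (e ^ 2)⁻¹ * |y| ^ (-1 / e)
        = |y| ^ (-1 / e) * |(log |y|)| / e ^ 2 := by ring
      _ ≤ _ := by
        gcongr
        · exact rpow_neg_inv_le_max ha he y
        · linarith
        · exact he.1
  simpa only [Real.norm_eq_abs] using
    (convex_Icc a b).norm_image_sub_le_of_norm_hasDerivWithin_le hderiv hbound hd hc

lemma abs_spow_neg_inv_comp_sub_le (ha : 0 < a) {α : ℝ → ℝ} (hrange : ∀ x, α x ∈ Icc a b)
    (hα : Differentiable ℝ α) {C : ℝ} (hC : ∀ x, |deriv α x| ≤ C) (y u v : ℝ) :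
    |spow y (-1 / α u) - spow y (-1 / α v)| ≤ C / a ^ 2 * wab a b y * |u - v| := by
  have hαuv : |α u - α v| ≤ C * |u - v| := by
    simpa only [Real.norm_eq_abs] using convex_univ.norm_image_sub_le_of_norm_deriv_le
      (fun x _ => hα x) (fun x _ => hC x) (mem_univ v) (mem_univ u)
  calc |spow y (-1 / α u) - spow y (-1 / α v)| ≤ wab a b y / a ^ 2 * |α u - α v| :=
        abs_spow_neg_inv_sub_le ha (hrange u) (hrange v) y
    _ ≤ wab a b y / a ^ 2 * (C * |u - v|) := by
        gcongr; exact div_nonneg (wab_nonneg a b y) (sq_nonneg a)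
    _ = C / a ^ 2 * wab a b y * |u - v| := by ring

lemma eventually_one_add_log_mul_rpow_le {b' : ℝ} (hb : 0 < b) (hbb' : b < b') :
    ∀ᶠ r in atTop, (1 + log r) * r ^ (-1 / b) ≤ r ^ (-1 / b') := by
  have hε : 0 < 1 / b - 1 / b' := sub_pos.2 (one_div_lt_one_div_of_lt hb hbb')
  filter_upwards [(isLittleO_log_rpow_atTop hε).bound (by norm_num : (0 : ℝ) < 1 / 2),
    (tendsto_rpow_atTop hε).eventually_ge_atTop 2, eventually_gt_atTop 0] with r hlog hr2 hr0
  rw [Real.norm_eq_abs, Real.norm_eq_abs, abs_of_pos (rpow_pos_of_pos hr0 _)] at hlog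
  calc (1 + log r) * r ^ (-1 / b) ≤ r ^ (1 / b - 1 / b') * r ^ (-1 / b) := by
        gcongr; linarith [le_abs_self (log r)]
    _ = r ^ (-1 / b') := by rw [← rpow_add hr0]; ring_nf

lemma summable_wab {ι : Type*} (ha : 0 < a) (hab : a ≤ b) {b' : ℝ} (hbb' : b < b')
    {y : ι → ℝ} (hy : Summable fun i => |y i| ^ (-1 / b')) :
    Summable fun i => wab a b (y i) := by
  have hb : 0 < b := ha.trans_le hab
  have hb' : -1 / b' < 0 := div_neg_of_neg_of_pos (by norm_num) (hb.trans hbb')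
  obtain ⟨R, hR⟩ := ((eventually_one_add_log_mul_rpow_le hb hbb').and
    (eventually_ge_atTop 1)).exists_forall_of_atTop
  have hR0 : 0 < R := zero_lt_one.trans_le (hR R le_rfl).2
  refine Summable.of_norm_bounded_eventually hy ?_
  filter_upwards [hy.tendsto_cofinite_zero.eventually
    (gt_mem_nhds (rpow_pos_of_pos hR0 (-1 / b')))] with i hi
  rw [Real.norm_eq_abs, abs_of_nonneg (wab_nonneg a b _)]
  rcases eq_or_ne (y i) 0 with h0 | h0
  · -- `0 ^ r = 0` for `r ≠ 0`: points with `y = 0` contribute nothing on either side.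
    rw [h0, wab_eq_max_mul, abs_zero, zero_rpow_neg_one_div ha.ne', zero_rpow_neg_one_div hb.ne',
      zero_rpow_neg_one_div (hb.trans hbb').ne', max_self, zero_mul]
  have hRy : R ≤ |y i| := ((rpow_lt_rpow_iff_of_neg (abs_pos.2 h0) hR0 hb').1 hi).le
  have hy1 : 1 ≤ |y i| := (hR R le_rfl).2.trans hRy
  rw [wab_eq_max_mul,
    max_eq_right (rpow_le_rpow_of_exponent_le hy1 (neg_one_div_le_neg_one_div ha hab)),
    abs_of_nonneg (log_nonneg hy1), mul_comm]
  exact (hR _ hRy).1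

end Coefficients

lemma jumpSum_eq_tsumIic {α : ℝ → ℝ} {Λ : Set (ℝ × ℝ)} {t₀ : ℝ} (hΛ : ∀ p ∈ Λ, t₀ < p.1)
    (f : ℝ → ℝ) (t : ℝ) :
    jumpSum α Λ t₀ t f = tsumIic (fun p : Λ => (p : ℝ × ℝ).1)
      (fun p => spow (p : ℝ × ℝ).2 (-1 / α (Function.leftLim f (p : ℝ × ℝ).1))) t := by
  refine tsum_congr fun p => ?_
  by_cases h : (p : ℝ × ℝ).1 ≤ t <;> simp [Set.indicator, h, hΛ p p.2]

theorem stmt4_general (a b b' t₀ t₁ a₀ : ℝ) (ha : 0 < a) (hab : a < b) (hbb' : b < b')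
    (α : ℝ → ℝ) (hrange : ∀ x, α x ∈ Set.Icc a b) (hsmooth : ContDiff ℝ 1 α)
    (hbd : ∃ C, ∀ x, |deriv α x| ≤ C)
    (Λ : Set (ℝ × ℝ))
    (hsubΛ : Λ ⊆ Set.Ioo t₀ t₁ ×ˢ (Set.univ : Set ℝ))
    (hΛ : Summable fun p : Λ => |(p : ℝ × ℝ).2| ^ (-1 / b')) :
    ∃ f : ℝ → ℝ, CadlagOn f t₀ t₁ ∧
      (∀ t ∈ Set.Ico t₀ t₁, f t = a₀ + jumpSum α Λ t₀ t f) ∧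
      f t₀ = a₀ ∧
      ∀ g : ℝ → ℝ, CadlagOn g t₀ t₁ →
        (∀ t ∈ Set.Ico t₀ t₁, g t = a₀ + jumpSum α Λ t₀ t g) →
        Set.EqOn g f (Set.Ico t₀ t₁) := by
  obtain ⟨C, hC⟩ := hbd
  set J : Λ → ℝ → ℝ := fun p v => spow (p : ℝ × ℝ).2 (-1 / α v)
  have hx (p : Λ) : (p : ℝ × ℝ).1 ∈ Ioo t₀ t₁ := (hsubΛ p.2).1
  have hw := summable_wab ha hab.le hbb' hΛ
  have hJ (p : Λ) (v : ℝ) : |J p v| ≤ wab a b (p : ℝ × ℝ).2 :=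
    abs_spow_neg_inv_le_wab ha (hrange v) _
  have hJL (p : Λ) (u v : ℝ) : |J p u - J p v| ≤ C / a ^ 2 * wab a b (p : ℝ × ℝ).2 * |u - v| :=
    abs_spow_neg_inv_comp_sub_le ha hrange (hsmooth.differentiable one_ne_zero) hC _ u v
  obtain ⟨u, hu, hu_unique⟩ := existsUnique_eq_add_tsumIio hw (hw.mul_left _) hJ hJL a₀
  have hjump := jumpSum_eq_tsumIic (α := α) fun p hp => (hsubΛ hp).1.1
  refine ⟨_, cadlagOn_add_tsumIic hw (fun p => hJ p _) a₀ t₀ t₁, fun t _ => ?_, ?_,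
    fun g _ hg => eqOn_of_eq_add_tsumIic_leftLim hw hJ hx hu_unique fun t ht => ?_⟩
  · rw [hjump]
    simp only [leftLim_add_tsumIic_of_fixed hw hJ hu, J]
  · rw [tsumIic_eq_zero_of_lt fun p => (hx p).1, add_zero]
  · rw [hg t ht, hjump]

/-- Existence and uniqueness of the càdlàg solution of the self-stabilizing equation;
in particular f(t₀) = a₀. -/
theorem stmt4 (a b b' t₀ t₁ a₀ : ℝ) (ha : 0 < a) (hab : a < b) (hbb' : b < b') (hb1 : b' < 1)
    (ht : t₀ < t₁)
    (α : ℝ → ℝ) (hrange : ∀ x, α x ∈ Set.Icc a b) (hsmooth : ContDiff ℝ 1 α)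
    (hbd : ∃ C, ∀ x, |deriv α x| ≤ C)
    (Λ : Set (ℝ × ℝ)) (hcount : Λ.Countable)
    (hsubΛ : Λ ⊆ Set.Ioo t₀ t₁ ×ˢ (Set.univ : Set ℝ))
    (hΛ : Summable fun p : Λ => |(p : ℝ × ℝ).2| ^ (-1 / b')) :
    ∃ f : ℝ → ℝ, CadlagOn f t₀ t₁ ∧
      (∀ t ∈ Set.Ico t₀ t₁, f t = a₀ + jumpSum α Λ t₀ t f) ∧
      f t₀ = a₀ ∧
      ∀ g : ℝ → ℝ, CadlagOn g t₀ t₁ →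
        (∀ t ∈ Set.Ico t₀ t₁, g t = a₀ + jumpSum α Λ t₀ t g) →
        Set.EqOn g f (Set.Ico t₀ t₁) :=
  stmt4_general a b b' t₀ t₁ a₀ ha hab hbb' α hrange hsmooth hbd Λ hsubΛ hΛ
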